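/- Let T be a finite combinatorial tree, α ∈ [0,1), and {i,j} ∈ E an edge such that 1/deg(i) + 1/deg(j) ≤ 1/(1−α). Then the Ollivier-Ricci curvature satisfies κ^{or,α}_{ij} = 2(1−α)·(1/deg(i) + 1/deg(j) − 1). -/

import Mathlib

/-- 1-Wasserstein distance on a graph w.r.t. the shortest path metric. -/
noncomputable def W1 {V : Type*} [Fintype V] (G : SimpleGraph V) (μ ν : V → ℝ) : ℝ :=
  sInf { c : ℝ | ∃ π : V → V → ℝ, (∀ i j, 0 ≤ π i j) ∧
    (∀ j, ∑ i, π i j = μ j) ∧ (∀ i, ∑ j, π i j = ν i) ∧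
    c = ∑ i, ∑ j, π i j * (G.dist i j : ℝ) }

/-- The α-lazy random walk measure at `x`. -/
noncomputable def lazy {V : Type*} [Fintype V] [DecidableEq V] (G : SimpleGraph V)
    [DecidableRel G.Adj] (α : ℝ) (x : V) : V → ℝ :=
  fun y => if y = x then α else if G.Adj x y then (1 - α) / (G.degree x : ℝ) else 0

/-!
On the edge `ij` of a tree the α-lazy measures at `i` and `j` are transported optimally by any
coupling that sends no mass from `j` (under `m_i`) back to `i` (under `m_j`); such a coupling
exists exactly when `m_i(j) + m_j(i) ≤ 1`, which is the hypothesis on the degrees. Optimality is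
certified by the potential `f` equal to `-1, 0, 1, 2` on `N(i) \ {j}, i, j, N(j) \ {i}`: it is
1-Lipschitz on the supports and `f x - f y = d(x, y)` on the support of such a coupling, so
`W₁ = ∫ f dm_j - ∫ f dm_i = 3 - 2α - 2(1-α)/deg i - 2(1-α)/deg j`.
-/

open Finset

namespace Transport

variable {ι : Type*} [Fintype ι] {μ ν : ι → ℝ} {π : ι → ι → ℝ}

/-- `π x y` is the mass moved from `y` (distributed by `μ`) to `x` (distributed by `ν`), as in
`W1`. -/
structure IsCoupling (μ ν : ι → ℝ) (π : ι → ι → ℝ) : Prop where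
  nonneg : ∀ x y, 0 ≤ π x y
  colSum : ∀ y, ∑ x, π x y = μ y
  rowSum : ∀ x, ∑ y, π x y = ν x

def cost (d : ι → ι → ℝ) (π : ι → ι → ℝ) : ℝ := ∑ x, ∑ y, π x y * d x y

namespace IsCoupling

variable (hπ : IsCoupling μ ν π)
include hπ

lemma left_ne_zero {x y : ι} (h : π x y ≠ 0) : μ y ≠ 0 :=
  ((lt_of_le_of_ne (hπ.nonneg x y) h.symm).trans_le
    (hπ.colSum y ▸ single_le_sum (fun x' _ => hπ.nonneg x' y) (mem_univ x))).ne'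

lemma right_ne_zero {x y : ι} (h : π x y ≠ 0) : ν x ≠ 0 :=
  ((lt_of_le_of_ne (hπ.nonneg x y) h.symm).trans_le
    (hπ.rowSum x ▸ single_le_sum (fun y' _ => hπ.nonneg x y') (mem_univ y))).ne'

lemma sum_mul_sub_sum_mul (f : ι → ℝ) :
    ∑ x, ν x * f x - ∑ y, μ y * f y = ∑ x, ∑ y, π x y * (f x - f y) := by
  simp only [mul_sub, sum_sub_distrib, ← sum_mul, hπ.rowSum]
  rw [sum_comm (f := fun x y => π x y * f y)]
  simp only [← sum_mul, hπ.colSum]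

lemma sum_mul_sub_sum_mul_le_cost {d : ι → ι → ℝ} {f : ι → ℝ}
    (hf : ∀ x y, ν x ≠ 0 → μ y ≠ 0 → f x - f y ≤ d x y) :
    ∑ x, ν x * f x - ∑ y, μ y * f y ≤ cost d π := by
  rw [hπ.sum_mul_sub_sum_mul]
  refine sum_le_sum fun x _ => sum_le_sum fun y _ => ?_
  by_cases h0 : π x y = 0
  · simp [h0]
  · exact mul_le_mul_of_nonneg_left (hf x y (hπ.right_ne_zero h0) (hπ.left_ne_zero h0))
      (hπ.nonneg x y)

lemma cost_eq_sum_mul_sub_sum_mul {d : ι → ι → ℝ} {f : ι → ℝ}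
    (hf : ∀ x y, π x y ≠ 0 → f x - f y = d x y) :
    cost d π = ∑ x, ν x * f x - ∑ y, μ y * f y := by
  rw [hπ.sum_mul_sub_sum_mul]
  refine sum_congr rfl fun x _ => sum_congr rfl fun y _ => ?_
  by_cases h0 : π x y = 0
  · simp [h0]
  · rw [hf x y h0]

end IsCoupling

/-- A rank-one correction of the product coupling `ν ⊗ μ`, by a multiple of
`(δ_a - ν) ⊗ (δ_b - μ)`, which has zero marginals. -/
lemma exists_isCoupling_apply_eq_zero [DecidableEq ι] (hμ : ∀ y, 0 ≤ μ y) (hν : ∀ x, 0 ≤ ν x)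
    (hμ1 : ∑ y, μ y = 1) (hν1 : ∑ x, ν x = 1) {a b : ι} (hab : μ b + ν a ≤ 1) :
    ∃ π, IsCoupling μ ν π ∧ π a b = 0 := by
  set D := (1 - ν a) * (1 - μ b)
  set t := ν a * μ b / D
  have hD : ν a * μ b ≤ D := by nlinarith
  have hD0 : 0 ≤ D := (mul_nonneg (hν a) (hμ b)).trans hD
  have ht0 : 0 ≤ t := div_nonneg (mul_nonneg (hν a) (hμ b)) hD0
  have ht1 : t ≤ 1 := div_le_one_of_le₀ hD hD0
  have htD : t * D = ν a * μ b := by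
    rcases hD0.eq_or_lt with h0 | hpos
    · simp only [t, ← h0, div_zero, zero_mul]
      linarith [mul_nonneg (hν a) (hμ b)]
    · exact div_mul_cancel₀ _ hpos.ne'
  have hνa : ν a ≤ 1 := by linarith [hμ b]
  have hμb : μ b ≤ 1 := by linarith [hν a]
  let e : ι → ι → ℝ := fun z x => if x = z then 1 else 0
  refine ⟨fun x y => ν x * μ y - t * (e a x - ν x) * (e b y - μ y),
    ⟨fun x y => ?_, fun y => ?_, fun x => ?_⟩, ?_⟩
  · by_cases hx : x = a <;> by_cases hy : y = b <;> simp only [e, hx, hy, if_true, if_false]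
    · linarith [show t * (1 - ν a) * (1 - μ b) = ν a * μ b by rw [mul_assoc]; exact htD]
    · nlinarith [mul_nonneg (mul_nonneg ht0 (sub_nonneg.2 hνa)) (hμ y), mul_nonneg (hν a) (hμ y)]
    · nlinarith [mul_nonneg (mul_nonneg ht0 (hν x)) (sub_nonneg.2 hμb), mul_nonneg (hν x) (hμ b)]
    · nlinarith [mul_nonneg (sub_nonneg.2 ht1) (mul_nonneg (hν x) (hμ y))]
  · simp [e, sum_sub_distrib, ← sum_mul, ← mul_sum, hν1]
  · simp [e, sum_sub_distrib, ← mul_sum, hμ1]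
  · simp only [e, if_true]
    linarith

end Transport

open Transport

lemma W1_eq_sum_mul_sub_sum_mul {V : Type*} [Fintype V] (G : SimpleGraph V) {μ ν : V → ℝ}
    {π : V → V → ℝ} {f : V → ℝ} (hπ : IsCoupling μ ν π)
    (hf_le : ∀ x y, ν x ≠ 0 → μ y ≠ 0 → f x - f y ≤ G.dist x y)
    (hf_eq : ∀ x y, π x y ≠ 0 → f x - f y = G.dist x y) :
    W1 G μ ν = ∑ x, ν x * f x - ∑ y, μ y * f y := by
  refine IsLeast.csInf_eq ⟨⟨π, hπ.nonneg, hπ.colSum, hπ.rowSum,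
    (hπ.cost_eq_sum_mul_sub_sum_mul hf_eq).symm⟩, ?_⟩
  rintro c ⟨π', h0, h1, h2, rfl⟩
  exact IsCoupling.sum_mul_sub_sum_mul_le_cost ⟨h0, h1, h2⟩ hf_le

section LazyWalk

variable {V : Type*} [Fintype V] [DecidableEq V] (G : SimpleGraph V) [DecidableRel G.Adj]
  {α : ℝ} {x y : V}

lemma sum_lazy_mul (g : V → ℝ) :
    ∑ y, lazy G α x y * g y = α * g x + (1 - α) / G.degree x * ∑ y ∈ G.neighborFinset x, g y := by
  have hterm : ∀ y, lazy G α x y * g y =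
      (if x = y then α * g x else 0) + if G.Adj x y then (1 - α) / G.degree x * g y else 0 := by
    intro y
    by_cases hxy : x = y
    · subst hxy; simp [lazy]
    · simp [lazy, Ne.symm hxy, hxy, ite_mul]
  rw [sum_congr rfl fun y _ => hterm y, sum_add_distrib, sum_ite_eq, if_pos (mem_univ x),
    ← sum_filter, mul_sum, G.neighborFinset_eq_filter]

lemma sum_lazy (hx : 0 < G.degree x) : ∑ y, lazy G α x y = 1 := by
  have := sum_lazy_mul G (α := α) (x := x) 1
  simp only [Pi.one_apply, mul_one, sum_const, SimpleGraph.card_neighborFinset_eq_degree,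
    nsmul_eq_mul] at this
  rw [this, div_mul_cancel₀ _ (by positivity)]
  ring

lemma lazy_nonneg (hα0 : 0 ≤ α) (hα1 : α ≤ 1) (x y : V) : 0 ≤ lazy G α x y := by
  unfold lazy
  split_ifs <;> first | assumption | positivity

lemma lazy_of_adj (h : G.Adj x y) : lazy G α x y = (1 - α) / G.degree x := by
  simp [lazy, h, h.ne']

lemma eq_or_adj_of_lazy_ne_zero (h : lazy G α x y ≠ 0) : y = x ∨ G.Adj x y := by
  unfold lazy at h
  split_ifs at h with h1 h2
  · exact .inl h1
  · exact .inr h2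
  · exact absurd rfl h

end LazyWalk

namespace SimpleGraph

variable {V : Type*}

noncomputable def edgePotential (G : SimpleGraph V) [DecidableEq V] [DecidableRel G.Adj]
    (i j x : V) : ℝ :=
  if x = i then 0 else if x = j then 1 else if G.Adj j x then 2 else if G.Adj i x then -1 else 0

variable {G : SimpleGraph V}

lemma IsAcyclic.dist_eq_length (hG : G.IsAcyclic) {u v : V} {p : G.Walk u v} (hp : p.IsPath) :
    G.dist u v = p.length := by
  obtain ⟨q, hq, hq_len⟩ := p.reachable.exists_path_of_dist
  rw [← hq_len, show q = p from
    congrArg Subtype.val ((hG.subsingleton_path u v).elim ⟨q, hq⟩ ⟨p, hp⟩)]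

lemma IsTree.not_adj_of_adj_of_adj (hG : G.IsTree) {i j z : V} (hij : G.Adj i j)
    (hiz : G.Adj i z) : ¬G.Adj j z := fun hjz =>
  hG.dist_ne_of_adj i hjz.symm <| by
    rw [dist_eq_one_iff_adj.2 hiz, dist_eq_one_iff_adj.2 hij]

variable [DecidableEq V] [DecidableRel G.Adj] {i j : V}

@[simp] lemma edgePotential_left : G.edgePotential i j i = 0 := by simp [edgePotential]

@[simp] lemma edgePotential_right (hij : G.Adj i j) : G.edgePotential i j j = 1 := by
  simp [edgePotential, hij.ne']

lemma edgePotential_of_adj_right {x : V} (hjx : G.Adj j x) (hxi : x ≠ i) :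
    G.edgePotential i j x = 2 := by
  simp [edgePotential, hxi, hjx, hjx.ne']

lemma IsTree.edgePotential_of_adj_left (hG : G.IsTree) (hij : G.Adj i j) {y : V}
    (hiy : G.Adj i y) (hyj : y ≠ j) : G.edgePotential i j y = -1 := by
  simp [edgePotential, hiy.ne', hyj, hG.not_adj_of_adj_of_adj hij hiy, hiy]

lemma IsTree.edgePotential_sub_eq_dist (hG : G.IsTree) (hij : G.Adj i j) {x y : V}
    (hx : x = j ∨ G.Adj j x) (hy : y = i ∨ G.Adj i y) (hxy : ¬(x = i ∧ y = j)) :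
    G.edgePotential i j x - G.edgePotential i j y = G.dist x y := by
  have hnij : ∀ {z}, G.Adj i z → ¬G.Adj j z := hG.not_adj_of_adj_of_adj hij
  rcases hx with rfl | hjx <;> rcases hy with rfl | hiy
  · rw [edgePotential_right hij, edgePotential_left, dist_comm, dist_eq_one_iff_adj.2 hij]
    norm_num
  · by_cases hyj : y = x
    · simp [hyj]
    · rw [edgePotential_right hij, hG.edgePotential_of_adj_left hij hiy hyj,
        hG.isAcyclic.dist_eq_length (p := .cons hij.symm (.cons hiy .nil))
          (by simp [hij.ne', hiy.ne, Ne.symm hyj])]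
      norm_num
  · by_cases hxi : x = y
    · simp [hxi]
    · rw [edgePotential_of_adj_right hjx hxi, edgePotential_left,
        hG.isAcyclic.dist_eq_length (p := .cons hjx.symm (.cons hij.symm .nil))
          (by simp [hij.ne', hjx.ne', hxi])]
      norm_num
  · by_cases hxi : x = i
    · subst hxi
      have hyj : y ≠ j := fun h => hxy ⟨rfl, h⟩
      rw [edgePotential_left, hG.edgePotential_of_adj_left hij hiy hyj, dist_eq_one_iff_adj.2 hiy]
      norm_num
    by_cases hyj : y = j
    · subst hyj
      rw [edgePotential_of_adj_right hjx hxi, edgePotential_right hij,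
        dist_eq_one_iff_adj.2 hjx.symm]
      norm_num
    have hxy : x ≠ y := fun h => hnij hiy (h ▸ hjx)
    rw [edgePotential_of_adj_right hjx hxi, hG.edgePotential_of_adj_left hij hiy hyj,
      hG.isAcyclic.dist_eq_length (p := .cons hjx.symm (.cons hij.symm (.cons hiy .nil)))
        (by simp [hij.ne', hjx.ne', hxi, hxy, hiy.ne, Ne.symm hyj])]
    norm_num

variable [Fintype V]

lemma IsTree.sum_edgePotential_neighborFinset_left (hG : G.IsTree) (hij : G.Adj i j) :
    ∑ y ∈ G.neighborFinset i, G.edgePotential i j y = 2 - G.degree i := by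
  have hj : j ∈ G.neighborFinset i := (mem_neighborFinset G i j).2 hij
  rw [← add_sum_erase _ _ hj, edgePotential_right hij,
    sum_congr rfl fun y hy => hG.edgePotential_of_adj_left hij
      ((mem_neighborFinset G i y).1 (mem_of_mem_erase hy)) (ne_of_mem_erase hy),
    sum_const, card_erase_of_mem hj, card_neighborFinset_eq_degree, nsmul_eq_mul,
    Nat.cast_pred (G.degree_pos_iff_exists_adj i |>.2 ⟨j, hij⟩)]
  ring

lemma sum_edgePotential_neighborFinset_right (hij : G.Adj i j) :
    ∑ x ∈ G.neighborFinset j, G.edgePotential i j x = 2 * (G.degree j - 1) := by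
  have hi : i ∈ G.neighborFinset j := (mem_neighborFinset G j i).2 hij.symm
  rw [← add_sum_erase _ _ hi, edgePotential_left,
    sum_congr rfl fun x hx => edgePotential_of_adj_right
      ((mem_neighborFinset G j x).1 (mem_of_mem_erase hx)) (ne_of_mem_erase hx),
    sum_const, card_erase_of_mem hi, card_neighborFinset_eq_degree, nsmul_eq_mul,
    Nat.cast_pred (G.degree_pos_iff_exists_adj j |>.2 ⟨i, hij.symm⟩)]
  ring

lemma IsTree.W1_lazy_eq_of_adj (hG : G.IsTree) {α : ℝ} (hα0 : 0 ≤ α) (hα1 : α ≤ 1)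
    (hij : G.Adj i j) (hmass : lazy G α i j + lazy G α j i ≤ 1) :
    W1 G (lazy G α i) (lazy G α j) =
      ∑ x, lazy G α j x * G.edgePotential i j x - ∑ y, lazy G α i y * G.edgePotential i j y := by
  obtain ⟨π, hπ, hπij⟩ := exists_isCoupling_apply_eq_zero (lazy_nonneg G hα0 hα1 i)
    (lazy_nonneg G hα0 hα1 j) (sum_lazy G (G.degree_pos_iff_exists_adj i |>.2 ⟨j, hij⟩))
    (sum_lazy G (G.degree_pos_iff_exists_adj j |>.2 ⟨i, hij.symm⟩)) hmass
  refine W1_eq_sum_mul_sub_sum_mul G hπ (fun x y hx hy => ?_) (fun x y hxy => ?_)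
  · by_cases h : x = i ∧ y = j
    · obtain ⟨rfl, rfl⟩ := h
      rw [edgePotential_left, edgePotential_right hij, dist_eq_one_iff_adj.2 hij]
      norm_num
    · exact (hG.edgePotential_sub_eq_dist hij (eq_or_adj_of_lazy_ne_zero G hx)
        (eq_or_adj_of_lazy_ne_zero G hy) h).le
  · exact hG.edgePotential_sub_eq_dist hij (eq_or_adj_of_lazy_ne_zero G (hπ.right_ne_zero hxy))
      (eq_or_adj_of_lazy_ne_zero G (hπ.left_ne_zero hxy)) fun ⟨hx, hy⟩ => hxy (hx ▸ hy ▸ hπij)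

end SimpleGraph

theorem stmt_11 {V : Type*} [Fintype V] [DecidableEq V] (G : SimpleGraph V)
    [DecidableRel G.Adj] (hT : G.IsTree) (α : ℝ) (hα : α ∈ Set.Ico (0 : ℝ) 1)
    (i j : V) (hadj : G.Adj i j)
    (hcond : 1 / (G.degree i : ℝ) + 1 / (G.degree j : ℝ) ≤ 1 / (1 - α)) :
    1 - W1 G (lazy G α i) (lazy G α j) / (G.dist i j : ℝ) =
      2 * (1 - α) * (1 / (G.degree i : ℝ) + 1 / (G.degree j : ℝ) - 1) := by
  obtain ⟨hα0, hα1⟩ := hα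
  have hdi : (0 : ℝ) < G.degree i := by exact_mod_cast G.degree_pos_iff_exists_adj i |>.2 ⟨j, hadj⟩
  have hdj : (0 : ℝ) < G.degree j := by
    exact_mod_cast G.degree_pos_iff_exists_adj j |>.2 ⟨i, hadj.symm⟩
  have hmass : lazy G α i j + lazy G α j i ≤ 1 := by
    rw [lazy_of_adj G hadj, lazy_of_adj G hadj.symm]
    calc (1 - α) / G.degree i + (1 - α) / G.degree j
        = (1 - α) * (1 / G.degree i + 1 / G.degree j) := by ring
      _ ≤ (1 - α) * (1 / (1 - α)) := by gcongr
      _ = 1 := mul_one_div_cancel (by linarith)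
  rw [hT.W1_lazy_eq_of_adj hα0 hα1.le hadj hmass, sum_lazy_mul, sum_lazy_mul,
    hT.sum_edgePotential_neighborFinset_left hadj, G.sum_edgePotential_neighborFinset_right hadj,
    G.edgePotential_left, G.edgePotential_right hadj, G.dist_eq_one_iff_adj.2 hadj]
  field_simp
  ring
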